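/- Let X be a finite-dimensional Banach space with numerical radius a norm on L(X), Z a subspace of X, and T ∈ L(X)_w nu-smooth with M_{w(T)} = { (μ x₀, conj(μ) x₀*) : |μ| = 1 } for some x₀* ∈ E_{X*}, x₀ ∈ E_X with x₀*(x₀) = 1. If T ⊥_w L(X, Z) (i.e., w(T + λS) ≥ w(T) for all scalars λ and all bounded operators S : X → X with range in Z), then x₀ is Birkhoff–James orthogonal to Z, i.e., ‖x₀ + λz‖ ≥ ‖x₀‖ for all z ∈ Z and scalars λ. -/

import Mathlib

/-!
Let `a = f₀ (T x₀)`, so `‖a‖ = w(T) > 0` (were `w(T) = 0`, every `g ∈ J_w(T)` would come with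
`-g ∈ J_w(T)`). If `f₀ z ≠ 0` for some `z ∈ Z`, the rank-one operator `D = f₀ ⊗ (-(a / f₀ z)) z`
has range in `Z`, and at every pair `(x, x*)` of `M_{w(T)}` the first-order term
`Re (conj (x* (T x)) * x* (D x))` equals `-w(T)²`. Since the unit pairs form a compact set, this
forces `w(T + t D) < w(T)` for small `t > 0`, against `T ⊥_w L(X, Z)`. So `f₀` vanishes on `Z`,
and a norming functional of `x₀` vanishing on `Z` witnesses `x₀ ⊥_B Z`.
-/

variable {𝕜 : Type*} [RCLike 𝕜] {X : Type*} [NormedAddCommGroup X] [NormedSpace 𝕜 X]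

/-- The numerical radius of a bounded linear operator on a Banach space. -/
noncomputable def nrad (T : X →L[𝕜] X) : ℝ :=
  sSup {r : ℝ | ∃ (x : X) (f : X →L[𝕜] 𝕜), ‖x‖ = 1 ∧ ‖f‖ = 1 ∧ f x = 1 ∧ r = ‖f (T x)‖}

/-- The functional `x* ⊗ x : T ↦ x*(Tx)` on `L(X)`. -/
noncomputable def tensor (f : X →L[𝕜] 𝕜) (x : X) : (X →L[𝕜] X) →L[𝕜] 𝕜 :=
  f.comp (ContinuousLinearMap.apply 𝕜 X x)

/-- The dual norm induced on functionals by the numerical radius norm. -/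
noncomputable def wdual (g : (X →L[𝕜] X) →L[𝕜] 𝕜) : ℝ :=
  sSup {r : ℝ | ∃ T : X →L[𝕜] X, nrad T ≤ 1 ∧ r = ‖g T‖}

/-- The set `J_w(T)` of norm-one supporting functionals of `T` in `(L(X)_w)*`. -/
noncomputable def Jw (T : X →L[𝕜] X) : Set ((X →L[𝕜] X) →L[𝕜] 𝕜) :=
  {g | wdual g = 1 ∧ g T = (nrad T : 𝕜)}

/-- The numerical radius attainment set `M_{w(T)}`. -/
noncomputable def Mw (T : X →L[𝕜] X) : Set (X × (X →L[𝕜] 𝕜)) :=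
  {p | ‖p.1‖ = 1 ∧ ‖p.2‖ = 1 ∧ p.2 p.1 = 1 ∧ ‖p.2 (T p.1)‖ = nrad T}

open RCLike ComplexConjugate Topology

lemma norm_add_real_smul_sq (u v : 𝕜) (t : ℝ) :
    ‖u + (t : 𝕜) * v‖ ^ 2 = ‖u‖ ^ 2 + t * (2 * re (conj u * v) + t * ‖v‖ ^ 2) := by
  rw [← RCLike.inner_apply' u v, norm_add_sq (𝕜 := 𝕜), ← smul_eq_mul (t : 𝕜) v, inner_smul_right,
    re_ofReal_mul, norm_smul, norm_ofReal, mul_pow, sq_abs]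
  ring

lemma norm_le_norm_add_of_apply_eq_zero {E : Type*} [NormedAddCommGroup E] [NormedSpace 𝕜 E]
    {f : E →L[𝕜] 𝕜} {x y : E} (hf : ‖f‖ ≤ 1) (hfx : f x = ‖x‖) (hfy : f y = 0) :
    ‖x‖ ≤ ‖x + y‖ :=
  calc ‖x‖ = ‖f (x + y)‖ := by rw [map_add, hfy, add_zero, hfx, norm_ofReal, abs_norm]
    _ ≤ ‖f‖ * ‖x + y‖ := f.le_opNorm _
    _ ≤ ‖x + y‖ := mul_le_of_le_one_left (norm_nonneg _) hf

variable (𝕜 X) in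
def unitPairs : Set (X × (X →L[𝕜] 𝕜)) :=
  {p | ‖p.1‖ = 1 ∧ ‖p.2‖ = 1 ∧ p.2 p.1 = 1}

lemma isCompact_unitPairs [FiniteDimensional 𝕜 X] : IsCompact (unitPairs 𝕜 X) := by
  have hclosed : IsClosed (unitPairs 𝕜 X) := by
    simp only [unitPairs, Set.ofPred_and]
    exact (isClosed_eq (by fun_prop) continuous_const).inter
      ((isClosed_eq (by fun_prop) continuous_const).inter (isClosed_eq (by fun_prop) continuous_const))
  have := FiniteDimensional.proper_rclike 𝕜 (X × (X →L[𝕜] 𝕜))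
  refine (ProperSpace.isCompact_closedBall (0 : X × (X →L[𝕜] 𝕜)) 1).of_isClosed_subset hclosed ?_
  rintro p ⟨h1, h2, -⟩
  rw [mem_closedBall_zero_iff, Prod.norm_def, h1, h2, max_self]

lemma continuous_eval_apply (R : X →L[𝕜] X) :
    Continuous fun p : X × (X →L[𝕜] 𝕜) => p.2 (R p.1) := by
  fun_prop

lemma nrad_nonneg (T : X →L[𝕜] X) : 0 ≤ nrad T :=
  Real.sSup_nonneg fun _ ⟨_, _, _, _, _, hr⟩ => hr ▸ norm_nonneg _

lemma nrad_eq_sSup_image (T : X →L[𝕜] X) :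
    nrad T = sSup ((fun p : X × (X →L[𝕜] 𝕜) => ‖p.2 (T p.1)‖) '' unitPairs 𝕜 X) := by
  rw [nrad]
  congr 1
  ext r
  simp [unitPairs, eq_comm, and_assoc]

lemma norm_apply_le_nrad (T : X →L[𝕜] X) {p : X × (X →L[𝕜] 𝕜)} (hp : p ∈ unitPairs 𝕜 X) :
    ‖p.2 (T p.1)‖ ≤ nrad T := by
  rw [nrad_eq_sSup_image]
  refine le_csSup ⟨‖T‖, ?_⟩ (Set.mem_image_of_mem _ hp)
  rintro _ ⟨q, ⟨hq1, hq2, -⟩, rfl⟩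
  calc ‖q.2 (T q.1)‖ ≤ ‖q.2‖ * (‖T‖ * ‖q.1‖) := q.2.le_of_opNorm_le_of_le le_rfl (T.le_opNorm _)
    _ = ‖T‖ := by rw [hq1, hq2]; ring

lemma nrad_lt_of_forall_lt [FiniteDimensional 𝕜 X] {T : X →L[𝕜] X} {r : ℝ} (hr : 0 < r)
    (h : ∀ p ∈ unitPairs 𝕜 X, ‖p.2 (T p.1)‖ < r) : nrad T < r := by
  rw [nrad_eq_sSup_image]
  rcases (unitPairs 𝕜 X).eq_empty_or_nonempty with hempty | hne
  · simpa [hempty] using hr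
  · exact (isCompact_unitPairs.sSup_lt_iff_of_continuous hne
      (continuous_eval_apply T).norm.continuousOn r).2 h

lemma nrad_zero : nrad (0 : X →L[𝕜] X) = 0 :=
  (Real.sSup_nonpos (by rintro _ ⟨_, _, _, _, _, rfl⟩; simp)).antisymm (nrad_nonneg 0)

lemma wdual_zero : wdual (0 : (X →L[𝕜] X) →L[𝕜] 𝕜) = 0 := by
  have : {r : ℝ | ∃ T : X →L[𝕜] X, nrad T ≤ 1 ∧ r = ‖(0 : (X →L[𝕜] X) →L[𝕜] 𝕜) T‖} = {0} := by
    ext r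
    simp only [Set.mem_ofPred_eq, Set.mem_singleton_iff]
    exact ⟨fun ⟨_, _, hr⟩ => by simpa using hr, fun hr => ⟨0, by simp [nrad_zero], by simpa using hr⟩⟩
  rw [wdual, this, csSup_singleton]

lemma wdual_neg (g : (X →L[𝕜] X) →L[𝕜] 𝕜) : wdual (-g) = wdual g := by
  simp [wdual]

lemma neg_mem_Jw {T : X →L[𝕜] X} {g : (X →L[𝕜] X) →L[𝕜] 𝕜} (hT : nrad T = 0) (hg : g ∈ Jw T) :
    -g ∈ Jw T :=
  ⟨(wdual_neg g).trans hg.1, by simp [hg.2, hT]⟩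

lemma nrad_pos_of_Jw_eq_singleton {T : X →L[𝕜] X} {g : (X →L[𝕜] X) →L[𝕜] 𝕜} (h : Jw T = {g}) :
    0 < nrad T := by
  have hg : g ∈ Jw T := h ▸ rfl
  refine (nrad_nonneg T).lt_of_ne fun hT => ?_
  have hneg : -g = g := by simpa [h] using neg_mem_Jw hT.symm hg
  have hg0 : g = 0 := by
    ext R
    exact CharZero.neg_eq_self_iff.mp (congrArg (· R) hneg)
  simpa [hg0, wdual_zero] using hg.1

lemma exists_nrad_add_smul_lt [FiniteDimensional 𝕜 X] {T D : X →L[𝕜] X} (hT : 0 < nrad T)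
    (hD : ∀ p ∈ Mw T, re (conj (p.2 (T p.1)) * p.2 (D p.1)) < 0) :
    ∃ t : ℝ, 0 < t ∧ nrad (T + (t : 𝕜) • D) < nrad T := by
  set K := unitPairs 𝕜 X
  set u := fun p : X × (X →L[𝕜] 𝕜) => p.2 (T p.1)
  set v := fun p : X × (X →L[𝕜] 𝕜) => p.2 (D p.1)
  have hu : Continuous u := continuous_eval_apply T
  have hv : Continuous v := continuous_eval_apply D
  -- Tube lemma: near a pair with `‖u p‖ < w(T)` continuity suffices; near a pair of `M_{w(T)}`
  -- the negative first-order term of `‖u + t v‖² = ‖u‖² + t (2 Re (conj u * v) + t ‖v‖²)` does.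
  have small : ∀ᶠ t : ℝ in 𝓝 0, ∀ p ∈ K, p ∈ K → 0 < t → ‖u p + (t : 𝕜) * v p‖ < nrad T := by
    refine isCompact_unitPairs.eventually_forall_of_forall_eventually fun p hp => ?_
    rcases (norm_apply_le_nrad T hp).lt_or_eq with hlt | heq
    · have hcont : Continuous fun q : ℝ × (X × (X →L[𝕜] 𝕜)) => ‖u q.2 + q.1 * v q.2‖ := by
        fun_prop
      filter_upwards [(hcont.tendsto (0, p)).eventually (eventually_lt_nhds (by simpa using hlt))]
        with q hq _ _ using hq
    · have hcont : Continuous fun q : ℝ × (X × (X →L[𝕜] 𝕜)) =>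
          2 * re (conj (u q.2) * v q.2) + q.1 * ‖v q.2‖ ^ 2 := by
        have := continuous_re (K := 𝕜)
        have := continuous_conj (K := 𝕜)
        fun_prop
      have hneg : 2 * re (conj (u p) * v p) + 0 * ‖v p‖ ^ 2 < 0 := by
        linarith [hD p ⟨hp.1, hp.2.1, hp.2.2, heq⟩]
      filter_upwards [(hcont.tendsto (0, p)).eventually (eventually_lt_nhds hneg)]
        with q hq hqK hq1
      refine lt_of_pow_lt_pow_left₀ 2 hT.le ?_
      rw [norm_add_real_smul_sq]
      nlinarith [norm_apply_le_nrad T hqK, norm_nonneg (u q.2)]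
  obtain ⟨t, ht, htpos⟩ := ((small.filter_mono nhdsWithin_le_nhds).and
    (self_mem_nhdsWithin : ∀ᶠ t in 𝓝[>] (0 : ℝ), 0 < t)).exists
  refine ⟨t, htpos, nrad_lt_of_forall_lt hT fun p hp => ?_⟩
  simpa [u, v, mul_comm] using ht p hp hp htpos

lemma apply_apply_smul_of_norm_eq_one {μ : 𝕜} (hμ : ‖μ‖ = 1) (f : X →L[𝕜] 𝕜) (R : X →L[𝕜] X)
    (x : X) : (conj μ • f) (R (μ • x)) = f (R x) := by
  rw [map_smul, smul_apply, map_smul, smul_eq_mul, smul_eq_mul, ← mul_assoc,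
    RCLike.conj_mul, hμ, ofReal_one, one_pow, one_mul]

theorem stmt_18_general {X : Type*} [NormedAddCommGroup X] [NormedSpace 𝕜 X]
    [FiniteDimensional 𝕜 X]
    (Z : Submodule 𝕜 X) (T : X →L[𝕜] X) (hsm : ∃ g, Jw T = {g})
    (x₀ : X) (f₀ : X →L[𝕜] 𝕜)
    (hfx : f₀ x₀ = 1)
    (hM : Mw T = {p | ∃ μ : 𝕜, ‖μ‖ = 1 ∧ p = (μ • x₀, (starRingEnd 𝕜 μ) • f₀)})
    (horth : ∀ S : X →L[𝕜] X, (∀ v : X, S v ∈ Z) →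
      ∀ c : 𝕜, nrad T ≤ nrad (T + c • S)) :
    ∀ z ∈ Z, ∀ c : 𝕜, ‖x₀‖ ≤ ‖x₀ + c • z‖ := by
  obtain ⟨g, hg⟩ := hsm
  have hA := nrad_pos_of_Jw_eq_singleton hg
  obtain ⟨hx₀, hf₀, -, hTx₀⟩ : (x₀, f₀) ∈ Mw T := hM ▸ ⟨1, by simp, by simp⟩
  suffices hZ : ∀ z ∈ Z, f₀ z = 0 from fun z hz c =>
    norm_le_norm_add_of_apply_eq_zero hf₀.le (by simp [hfx, hx₀]) (by simp [hZ z hz])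
  intro z hz
  by_contra hβ
  set a := f₀ (T x₀)
  set D := f₀.smulRight (-(a / f₀ z) • z)
  have hD : ∀ p ∈ Mw T, re (conj (p.2 (T p.1)) * p.2 (D p.1)) < 0 := by
    rw [hM]
    rintro _ ⟨μ, hμ, rfl⟩
    have hDx₀ : f₀ (D x₀) = -a := by
      simp [D, hfx, div_mul_cancel₀ _ hβ]
    rw [apply_apply_smul_of_norm_eq_one hμ, apply_apply_smul_of_norm_eq_one hμ, hDx₀, mul_neg,
      RCLike.conj_mul, ← ofReal_pow, ← ofReal_neg, ofReal_re, hTx₀, neg_lt_zero]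
    exact pow_pos hA 2
  obtain ⟨t, -, ht⟩ := exists_nrad_add_smul_lt hA hD
  exact (horth D (fun v => Z.smul_mem _ (Z.smul_mem _ hz)) t).not_gt ht

/-- If `T` is nu-smooth with `M_{w(T)} = {(μx₀, conj(μ)x₀*)}` and `T ⊥_w L(X,Z)`, then
`x₀ ⊥_B Z`. -/
theorem stmt_18 {X : Type*} [NormedAddCommGroup X] [NormedSpace 𝕜 X]
    [NormedSpace ℝ X] [IsScalarTower ℝ 𝕜 X] [FiniteDimensional 𝕜 X]
    (hw : ∀ T : X →L[𝕜] X, nrad T = 0 → T = 0)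
    (Z : Submodule 𝕜 X) (T : X →L[𝕜] X) (hsm : ∃ g, Jw T = {g})
    (x₀ : X) (f₀ : X →L[𝕜] 𝕜)
    (hx₀ : x₀ ∈ Set.extremePoints ℝ (Metric.closedBall (0 : X) 1))
    (hf₀ : f₀ ∈ Set.extremePoints ℝ (Metric.closedBall (0 : X →L[𝕜] 𝕜) 1))
    (hfx : f₀ x₀ = 1)
    (hM : Mw T = {p | ∃ μ : 𝕜, ‖μ‖ = 1 ∧ p = (μ • x₀, (starRingEnd 𝕜 μ) • f₀)})
    (horth : ∀ S : X →L[𝕜] X, (∀ v : X, S v ∈ Z) →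
      ∀ c : 𝕜, nrad T ≤ nrad (T + c • S)) :
    ∀ z ∈ Z, ∀ c : 𝕜, ‖x₀‖ ≤ ‖x₀ + c • z‖ :=
  stmt_18_general Z T hsm x₀ f₀ hfx hM horth
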